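/- Let T > 0, r ≥ 1, α ∈ (0,1), β ∈ (0,1/2), set σ := min{3/2−α−β, 1}, and let κ ∈ {1/2−β, σ}. Then there exists a constant C > 0, independent of N and n, such that for every integer N ≥ 1 and every n ∈ {1,…,N}, ∫_{t₁}^{t_n} (t_n − s)^{−α}·ŝ^{β−1/2}·(s − ŝ)^{σ} ds ≤ C·t_n^{1/2−α+β+σ−κ/r}·N^{−κ}, where ŝ is the left graded-mesh point of s. -/

import Mathlib

/-!
On a mesh cell `[t_i, t_{i+1})` with `i ≥ 1` one has `t_{i+1} ≤ 2^r t_i`, and by Bernoulli's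
inequality `t_{i+1} - t_i ≤ r T^{1/r} t_{i+1}^{1-1/r} / N`. Hence `ŝ ≥ 2^{-r} s` and
`s - ŝ ≲ s^{1-1/r} / N`, so writing `(s - ŝ)^σ ≤ s^{σ-κ} (s - ŝ)^κ` bounds the integrand by
`N^{-κ} (t_n - s)^{-α} s^γ` with `γ = β - 1/2 + σ - κ/r > -1`. The integral of the latter over
`[0, t_n]` is a Beta integral, equal to `t_n^{1-α+γ}` times a constant.
-/

open MeasureTheory Set intervalIntegral

/-- The graded mesh point `t_n = T * (n/N)^r`. -/
noncomputable def gmesh (T r : ℝ) (N n : ℕ) : ℝ := T * ((n : ℝ) / (N : ℝ)) ^ r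

lemma exists_mem_Ico_of_le_of_lt {β : Type*} [LinearOrder β] (f : ℕ → β) {m n : ℕ} {x : β}
    (hmn : m ≤ n) (hm : f m ≤ x) (hn : x < f n) :
    ∃ i, m ≤ i ∧ i < n ∧ x ∈ Ico (f i) (f (i + 1)) := by
  induction n, hmn using Nat.le_induction with
  | base => exact absurd hm (not_le.mpr hn)
  | succ n hmn ih =>
    by_cases h : f n ≤ x
    · exact ⟨n, hmn, n.lt_succ_self, h, hn⟩
    · obtain ⟨i, hmi, hin, hi⟩ := ih (not_le.mp h)
      exact ⟨i, hmi, by omega, hi⟩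

lemma rpow_sub_rpow_le_mul_sub {a b r : ℝ} (hb : 0 ≤ b) (hba : b ≤ a) (hr : 1 ≤ r) :
    a ^ r - b ^ r ≤ r * a ^ (r - 1) * (a - b) := by
  rcases (hb.trans hba).eq_or_lt with ha | ha
  · obtain rfl : b = 0 := le_antisymm (ha ▸ hba) hb
    simp [← ha]
  have bernoulli := one_add_mul_self_le_rpow_one_add
    (by linarith [div_nonneg hb ha.le] : (-1:ℝ) ≤ b / a - 1) hr
  rw [add_sub_cancel, Real.div_rpow hb ha.le, le_div_iff₀ (by positivity)] at bernoulli
  rw [Real.rpow_sub_one ha.ne']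
  have : (1 + r * (b / a - 1)) * a ^ r = a ^ r - r * (a ^ r / a) * (a - b) := by
    field_simp; ring
  linarith

lemma intervalIntegrable_sub_rpow_mul_rpow {a b t : ℝ} (ha : -1 < a) (hb : -1 < b) (ht : 0 < t) :
    IntervalIntegrable (fun s => (t - s) ^ a * s ^ b) volume 0 t := by
  have left : IntervalIntegrable (fun s => (t - s) ^ a * s ^ b) volume 0 (t / 2) := by
    refine (intervalIntegrable_rpow' hb).continuousOn_mul (ContinuousOn.rpow_const (by fun_prop) ?_)
    intro s hs
    rw [uIcc_of_le (by linarith)] at hs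
    exact Or.inl (by linarith [hs.2])
  have right : IntervalIntegrable (fun s => (t - s) ^ a * s ^ b) volume (t / 2) t := by
    refine IntervalIntegrable.mul_continuousOn ?_ (ContinuousOn.rpow_const continuousOn_id ?_)
    · simpa [sub_half] using (intervalIntegrable_rpow' ha (a := t / 2) (b := 0)).comp_sub_left t
    · intro s hs
      rw [uIcc_of_le (by linarith)] at hs
      exact Or.inl (by linarith [hs.1])
  exact left.trans right

lemma integral_sub_rpow_mul_rpow {a b t : ℝ} (ht : 0 < t) :
    ∫ s in (0:ℝ)..t, (t - s) ^ a * s ^ b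
      = t ^ (1 + a + b) * ∫ u in (0:ℝ)..1, (1 - u) ^ a * u ^ b := by
  have scale := integral_comp_mul_left
    (a := 0) (b := 1) (fun s => (t - s) ^ a * s ^ b) ht.ne'
  rw [mul_zero, mul_one, smul_eq_mul, eq_inv_mul_iff_mul_eq₀ ht.ne'] at scale
  rw [← scale, ← intervalIntegral.integral_const_mul, ← intervalIntegral.integral_const_mul]
  refine intervalIntegral.integral_congr fun u hu => ?_
  rw [uIcc_of_le zero_le_one] at hu
  rw [show t - t * u = t * (1 - u) by ring, Real.mul_rpow ht.le (by linarith [hu.2]),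
    Real.mul_rpow ht.le hu.1, Real.rpow_add ht, Real.rpow_add ht, Real.rpow_one]
  ring

lemma integral_le_integral_of_le_Ioo_of_nonneg {f g : ℝ → ℝ} {a b c : ℝ} (hca : c ≤ a)
    (hab : a ≤ b) (hg : IntervalIntegrable g volume c b) (hg₀ : ∀ x ∈ Icc c b, 0 ≤ g x)
    (hfg : ∀ x ∈ Ioo a b, f x ≤ g x) : ∫ x in a..b, f x ≤ ∫ x in c..b, g x := by
  -- No integrability of `f` is needed: if it fails, its integral is the junk value `0`.
  have hg' : IntervalIntegrable g volume a b := hg.mono_set <| by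
    rw [uIcc_of_le hab, uIcc_of_le (hca.trans hab)]; exact Icc_subset_Icc_left hca
  calc ∫ x in a..b, f x ≤ ∫ x in a..b, g x := by
        by_cases hf : IntervalIntegrable f volume a b
        · exact integral_mono_on_of_le_Ioo hab hf hg' hfg
        · rw [integral_undef hf]
          exact integral_nonneg hab fun x hx => hg₀ x ⟨hca.trans hx.1, hx.2⟩
    _ ≤ ∫ x in c..b, g x := integral_mono_interval hca hab le_rfl
        (ae_restrict_of_forall_mem measurableSet_Ioc fun x hx => hg₀ x (Ioc_subset_Icc_self hx)) hg

lemma integral_le_of_le_sub_rpow_mul_rpow {f : ℝ → ℝ} {a t M p q : ℝ} (ha : 0 ≤ a) (hat : a ≤ t)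
    (ht : 0 < t) (hp : -1 < p) (hq : -1 < q) (hM : 0 ≤ M)
    (hf : ∀ s ∈ Ioo a t, f s ≤ M * ((t - s) ^ p * s ^ q)) :
    ∫ s in a..t, f s ≤ M * (t ^ (1 + p + q) * ∫ u in (0:ℝ)..1, (1 - u) ^ p * u ^ q) := by
  rw [← integral_sub_rpow_mul_rpow ht, ← intervalIntegral.integral_const_mul]
  refine integral_le_integral_of_le_Ioo_of_nonneg ha hat
    ((intervalIntegrable_sub_rpow_mul_rpow hp hq ht).const_mul M) (fun s hs => ?_) hf
  have := Real.rpow_nonneg (sub_nonneg.2 hs.2) p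
  have := Real.rpow_nonneg hs.1 q
  positivity

lemma rpow_le_rpow_mul_rpow {x y s σ κ : ℝ} (hx : 0 ≤ x) (hxs : x ≤ s) (hxy : x ≤ y)
    (hκ : 0 < κ) (hκσ : κ ≤ σ) : x ^ σ ≤ s ^ (σ - κ) * y ^ κ := by
  rw [show σ = σ - κ + κ by ring, Real.rpow_add' hx (by linarith), add_sub_cancel_right]
  exact mul_le_mul (Real.rpow_le_rpow hx hxs (by linarith)) (Real.rpow_le_rpow hx hxy hκ.le)
    (by positivity) (Real.rpow_nonneg (hx.trans hxs) _)

section GradedMesh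

variable {T r : ℝ} {N : ℕ}

lemma gmesh_nonneg (hT : 0 ≤ T) (n : ℕ) : 0 ≤ gmesh T r N n := by
  unfold gmesh; positivity

lemma gmesh_pos (hT : 0 < T) (hN : 0 < N) {n : ℕ} (hn : 0 < n) : 0 < gmesh T r N n := by
  unfold gmesh; positivity

lemma gmesh_mono (hT : 0 ≤ T) (hr : 0 ≤ r) : Monotone (gmesh T r N) := fun m n hmn => by
  unfold gmesh; gcongr

lemma gmesh_succ_le (hT : 0 ≤ T) (hr : 0 ≤ r) {i : ℕ} (hi : 1 ≤ i) :
    gmesh T r N (i + 1) ≤ 2 ^ r * gmesh T r N i := by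
  have : ((i + 1 : ℕ) : ℝ) / N ≤ 2 * (i / N) := by
    rw [← mul_div_assoc]; gcongr; push_cast; exact_mod_cast (by omega : i + 1 ≤ 2 * i)
  calc gmesh T r N (i + 1) ≤ T * (2 * (i / N)) ^ r :=
        mul_le_mul_of_nonneg_left (Real.rpow_le_rpow (by positivity) this hr) hT
    _ = 2 ^ r * gmesh T r N i := by
      rw [Real.mul_rpow zero_le_two (by positivity)]; unfold gmesh; ring

lemma gmesh_succ_sub_le (hT : 0 ≤ T) (hr : 1 ≤ r) (hN : 0 < N) (i : ℕ) :
    gmesh T r N (i + 1) - gmesh T r N i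
      ≤ r * T ^ (1 / r) * gmesh T r N (i + 1) ^ (1 - 1 / r) / N := by
  have hN' : (0 : ℝ) < N := by exact_mod_cast hN
  set a : ℝ := (i + 1 : ℕ) / N
  have ha : 0 ≤ a := by positivity
  have hb : (0 : ℝ) ≤ i / N := by positivity
  have hba : (i : ℝ) / N ≤ a := div_le_div_of_nonneg_right (by push_cast; linarith) hN'.le
  have power : T * a ^ (r - 1) = T ^ (1 / r) * gmesh T r N (i + 1) ^ (1 - 1 / r) := by
    rw [gmesh, Real.mul_rpow hT (by positivity), ← Real.rpow_mul ha, ← mul_assoc,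
      ← Real.rpow_add' hT (by norm_num), show 1 / r + (1 - 1 / r) = 1 by ring, Real.rpow_one,
      show r * (1 - 1 / r) = r - 1 by field_simp]
  calc gmesh T r N (i + 1) - gmesh T r N i = T * (a ^ r - ((i : ℝ) / N) ^ r) := by
        unfold gmesh; ring
    _ ≤ T * (r * a ^ (r - 1) * (a - i / N)) := by
        gcongr; exact rpow_sub_rpow_le_mul_sub hb hba hr
    _ = r * (T * a ^ (r - 1)) / N := by
        rw [show a - i / N = 1 / N by simp only [a]; push_cast; field_simp; ring]; ring
    _ = _ := by rw [power]; ring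

/-- The factor `2^{r(1/2-β)}` comes from `ŝ ≥ 2^{-r} s`, the other one from
`s - ŝ ≤ r 2^{r-1} T^{1/r} s^{1-1/r} / N`. -/
noncomputable def gmeshWeightConst (T r β κ : ℝ) : ℝ :=
  2 ^ (r * (1 / 2 - β)) * (r * 2 ^ (r - 1) * T ^ (1 / r)) ^ κ

lemma gmeshWeightConst_pos (hT : 0 < T) (hr : 0 < r) (β κ : ℝ) : 0 < gmeshWeightConst T r β κ := by
  unfold gmeshWeightConst; positivity

lemma gmesh_weight_le (hT : 0 < T) (hr : 1 ≤ r) (hN : 0 < N) {i : ℕ} (hi : 1 ≤ i) {s : ℝ}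
    (hs : s ∈ Ico (gmesh T r N i) (gmesh T r N (i + 1))) {β σ κ : ℝ} (hβ : β ≤ 1 / 2)
    (hκ : 0 < κ) (hκσ : κ ≤ σ) :
    gmesh T r N i ^ (β - 1 / 2) * (s - gmesh T r N i) ^ σ
      ≤ gmeshWeightConst T r β κ * (N : ℝ) ^ (-κ) * s ^ (β - 1 / 2 + σ - κ / r) := by
  obtain ⟨hs₁, hs₂⟩ := hs
  have hN' : (0 : ℝ) < N := by exact_mod_cast hN
  have hti : 0 < gmesh T r N i := gmesh_pos hT hN hi
  have hs : 0 < s := hti.trans_le hs₁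
  have hsucc : gmesh T r N (i + 1) ≤ 2 ^ r * gmesh T r N i := gmesh_succ_le hT.le (by linarith) hi
  have left : gmesh T r N i ^ (β - 1 / 2) ≤ 2 ^ (r * (1 / 2 - β)) * s ^ (β - 1 / 2) := by
    have : 2 ^ (-r) * s ≤ gmesh T r N i := by
      rw [Real.rpow_neg zero_le_two, inv_mul_le_iff₀ (by positivity)]; linarith
    calc gmesh T r N i ^ (β - 1 / 2) ≤ (2 ^ (-r) * s) ^ (β - 1 / 2) :=
          Real.rpow_le_rpow_of_nonpos (by positivity) this (by linarith)
      _ = _ := by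
          rw [Real.mul_rpow (by positivity) hs.le, ← Real.rpow_mul zero_le_two]; ring_nf
  have step : s - gmesh T r N i ≤ r * 2 ^ (r - 1) * T ^ (1 / r) * s ^ (1 - 1 / r) / N := by
    have : 0 ≤ 1 - 1 / r := by
      rw [sub_nonneg, div_le_one (by linarith)]; exact hr
    calc s - gmesh T r N i ≤ gmesh T r N (i + 1) - gmesh T r N i := by linarith
      _ ≤ r * T ^ (1 / r) * gmesh T r N (i + 1) ^ (1 - 1 / r) / N :=
          gmesh_succ_sub_le hT.le hr hN i
      _ ≤ r * T ^ (1 / r) * (2 ^ r * s) ^ (1 - 1 / r) / N := by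
          have := gmesh_nonneg hT.le (r := r) (N := N) (i + 1)
          gcongr
          exact hsucc.trans (by gcongr)
      _ = _ := by
          rw [Real.mul_rpow (by positivity) hs.le, ← Real.rpow_mul zero_le_two,
            show r * (1 - 1 / r) = r - 1 by field_simp]
          ring
  have powers : s ^ (β - 1 / 2) * (s ^ (σ - κ) * (s ^ (1 - 1 / r)) ^ κ)
      = s ^ (β - 1 / 2 + σ - κ / r) := by
    rw [← Real.rpow_mul hs.le, ← Real.rpow_add hs, ← Real.rpow_add hs]
    ring_nf
  calc gmesh T r N i ^ (β - 1 / 2) * (s - gmesh T r N i) ^ σ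
      ≤ 2 ^ (r * (1 / 2 - β)) * s ^ (β - 1 / 2)
        * (s ^ (σ - κ) * (r * 2 ^ (r - 1) * T ^ (1 / r) * s ^ (1 - 1 / r) / N) ^ κ) := by
        gcongr
        exact rpow_le_rpow_mul_rpow (by linarith) (by linarith) step hκ hκσ
    _ = _ := by
        rw [Real.div_rpow (by positivity) hN'.le, Real.mul_rpow (by positivity) (by positivity),
          Real.rpow_neg hN'.le, ← powers, gmeshWeightConst]
        ring

lemma gmesh_integrand_le (hT : 0 < T) (hr : 1 ≤ r) (hN : 0 < N) {hat : ℝ → ℝ}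
    (hhat : ∀ i < N, ∀ s ∈ Ico (gmesh T r N i) (gmesh T r N (i + 1)), hat s = gmesh T r N i)
    {n : ℕ} (hn : 1 ≤ n) (hnN : n ≤ N) {p β σ κ : ℝ} (hβ : β ≤ 1 / 2) (hκ : 0 < κ) (hκσ : κ ≤ σ)
    {s : ℝ} (hs : s ∈ Ioo (gmesh T r N 1) (gmesh T r N n)) :
    (gmesh T r N n - s) ^ p * hat s ^ (β - 1 / 2) * (s - hat s) ^ σ
      ≤ gmeshWeightConst T r β κ * (N : ℝ) ^ (-κ)
        * ((gmesh T r N n - s) ^ p * s ^ (β - 1 / 2 + σ - κ / r)) := by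
  obtain ⟨i, hi, hin, hsi⟩ := exists_mem_Ico_of_le_of_lt (gmesh T r N) hn hs.1.le hs.2
  rw [hhat i (by omega) s hsi, mul_assoc]
  calc _ ≤ (gmesh T r N n - s) ^ p
        * (gmeshWeightConst T r β κ * (N : ℝ) ^ (-κ) * s ^ (β - 1 / 2 + σ - κ / r)) :=
        mul_le_mul_of_nonneg_left (gmesh_weight_le hT hr hN hi hsi hβ hκ hκσ)
          (Real.rpow_nonneg (sub_nonneg.2 hs.2.le) _)
    _ = _ := by ring

end GradedMesh

/-- Bound with weight singularity on the graded mesh (equation `eq.kappa`). -/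
theorem stmt12 (T r α β : ℝ) (hT : 0 < T) (hr : 1 ≤ r)
    (hα : α ∈ Set.Ioo (0:ℝ) 1) (hβ : β ∈ Set.Ioo (0:ℝ) (1/2))
    (σ : ℝ) (hσ : σ = min (3/2 - α - β) 1)
    (κ : ℝ) (hκ : κ = 1/2 - β ∨ κ = σ) :
    ∃ C > (0:ℝ), ∀ N : ℕ, 1 ≤ N → ∀ hat : ℝ → ℝ,
      (∀ i : ℕ, i < N →
        ∀ s ∈ Set.Ico (gmesh T r N i) (gmesh T r N (i + 1)), hat s = gmesh T r N i) →
      ∀ n : ℕ, 1 ≤ n → n ≤ N →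
        (∫ s in (gmesh T r N 1)..(gmesh T r N n),
            (gmesh T r N n - s) ^ (-α) * (hat s) ^ (β - 1/2) * (s - hat s) ^ σ)
          ≤ C * (gmesh T r N n) ^ (1/2 - α + β + σ - κ / r) * (N : ℝ) ^ (-κ) := by
  obtain ⟨-, hα₁⟩ := hα
  obtain ⟨hβ₀, hβ₁⟩ := hβ
  have hκ₀ : 0 < κ := by
    rcases hκ with rfl | rfl
    · linarith
    · exact hσ ▸ lt_min (by linarith) one_pos
  have hκσ : κ ≤ σ := by
    rcases hκ with rfl | rfl
    · exact hσ ▸ le_min (by linarith) (by linarith)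
    · rfl
  set γ := β - 1 / 2 + σ - κ / r with hγ_def
  have hγ : -1 < γ := by rw [hγ_def]; linarith [div_le_self hκ₀.le hr]
  set K := gmeshWeightConst T r β κ
  set B := ∫ u in (0:ℝ)..1, (1 - u) ^ (-α) * u ^ γ
  have hB : 0 ≤ B := integral_nonneg zero_le_one fun u hu =>
    mul_nonneg (Real.rpow_nonneg (by linarith [hu.2]) _) (Real.rpow_nonneg hu.1 _)
  have hK : 0 < K := gmeshWeightConst_pos hT (by linarith) β κ
  refine ⟨K * B + 1, by positivity, fun N hN hat hhat n hn hnN => ?_⟩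
  have htn : 0 < gmesh T r N n := gmesh_pos hT hN hn
  have hNκ : 0 ≤ (N : ℝ) ^ (-κ) := Real.rpow_nonneg (Nat.cast_nonneg N) _
  have htnκ := Real.rpow_nonneg htn.le (1 / 2 - α + β + σ - κ / r)
  calc _ ≤ K * (N : ℝ) ^ (-κ) * (gmesh T r N n ^ (1 + -α + γ) * B) :=
        integral_le_of_le_sub_rpow_mul_rpow (gmesh_nonneg hT.le 1)
          (gmesh_mono hT.le (by linarith) hn) htn (by linarith) hγ (by positivity)
          fun s hs => gmesh_integrand_le hT hr hN hhat hn hnN hβ₁.le hκ₀ hκσ hs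
    _ ≤ (K * B + 1) * gmesh T r N n ^ (1 / 2 - α + β + σ - κ / r) * (N : ℝ) ^ (-κ) := by
        rw [show 1 + -α + γ = 1 / 2 - α + β + σ - κ / r by rw [hγ_def]; ring]
        nlinarith [mul_nonneg htnκ hNκ]
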